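/- The HOP function is differentiable on ℝ and its proximity displacement admits the closed form: for all x ∈ ℝ, x − l_{p,c}'(x) = max{0, |x| − c^{2−p}·|x|^{p−1}}·sign(x) (the right-hand side interpreted as 0 at x = 0); in particular this expression vanishes exactly when |x| ≤ c. -/

import Mathlib

/-!
Inside `[-c, c]` the HOP function is `x²/2`, with derivative `x`; outside it is an affine image of
`|x|^p`, with derivative `c^{2-p} |x|^{p-1} sign x`. At `|x| = c` both branches take the value
`c²/2` and have slope `x`, so the function is differentiable everywhere. Since
`|x| - c^{2-p} |x|^{p-1} = (|x|^{2-p} - c^{2-p}) |x|^{p-1}` and `2 - p > 0`, this quantity has the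
sign of `|x| - c` for `x ≠ 0`, so the `max` vanishes exactly on `[-c, c]`.
-/

open Set

/-- The hybrid ordinary-ℓp (HOP) function with parameters `0 < p ≤ 1`, `c > 0`. -/
noncomputable def hop (p c x : ℝ) : ℝ :=
  if |x| ≤ c then x ^ 2 / 2
  else (1 / p) * c ^ ((2 : ℝ) - p) * |x| ^ p + c ^ 2 / 2 - c ^ 2 / p

theorem HasDerivAt.piecewise {𝕜 F : Type*} [NontriviallyNormedField 𝕜] [NormedAddCommGroup F]
    [NormedSpace 𝕜 F] {s : Set 𝕜} [∀ y, Decidable (y ∈ s)] {f g : 𝕜 → F} {f' : F} {x : 𝕜}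
    (hf : HasDerivAt f f' x) (hg : HasDerivAt g f' x) (hfg : f x = g x) :
    HasDerivAt (s.piecewise f g) f' x := by
  have hx : s.piecewise f g x = f x := by by_cases h : x ∈ s <;> simp [h, hfg]
  rw [← hasDerivWithinAt_univ, ← union_compl_self s]
  exact (hf.hasDerivWithinAt.congr (piecewise_eqOn s f g) hx).union
    (hg.hasDerivWithinAt.congr (piecewise_eqOn_compl s f g) (hx.trans hfg))

theorem Real.sign_eq_signType_sign (x : ℝ) : Real.sign x = SignType.sign x := by
  rcases lt_trichotomy x 0 with h | rfl | h
  · simp [Real.sign_of_neg h, h]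
  · simp
  · simp [Real.sign_of_pos h, h]

theorem Real.abs_mul_sign (x : ℝ) : |x| * Real.sign x = x := by
  rw [Real.sign_eq_signType_sign]
  exact _root_.abs_mul_sign x

section Displacement

variable {p c t : ℝ}

theorem sub_rpow_mul_rpow_eq (ht : 0 < t) :
    t - c ^ ((2 : ℝ) - p) * t ^ (p - 1) = (t ^ ((2 : ℝ) - p) - c ^ ((2 : ℝ) - p)) * t ^ (p - 1) := by
  rw [sub_mul, ← Real.rpow_add ht]
  norm_num

theorem sub_rpow_mul_rpow_nonpos (hp : p ≤ 2) (ht : 0 < t) (htc : t ≤ c) :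
    t - c ^ ((2 : ℝ) - p) * t ^ (p - 1) ≤ 0 := by
  rw [sub_rpow_mul_rpow_eq ht]
  exact mul_nonpos_of_nonpos_of_nonneg
    (sub_nonpos.mpr (Real.rpow_le_rpow ht.le htc (by linarith))) (Real.rpow_nonneg ht.le _)

theorem sub_rpow_mul_rpow_pos (hp : p < 2) (hc : 0 ≤ c) (htc : c < t) :
    0 < t - c ^ ((2 : ℝ) - p) * t ^ (p - 1) := by
  have ht : 0 < t := hc.trans_lt htc
  rw [sub_rpow_mul_rpow_eq ht]
  exact mul_pos (sub_pos.mpr (Real.rpow_lt_rpow hc htc (by linarith))) (Real.rpow_pos_of_pos ht _)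

end Displacement

noncomputable def hopDeriv (p c x : ℝ) : ℝ :=
  if |x| ≤ c then x else c ^ ((2 : ℝ) - p) * |x| ^ (p - 1) * Real.sign x

noncomputable def hopShrink (p c x : ℝ) : ℝ :=
  max 0 (|x| - c ^ ((2 : ℝ) - p) * |x| ^ (p - 1)) * Real.sign x

section Shrink

variable {p c x : ℝ}

theorem hopShrink_of_abs_le (hp : p ≤ 2) (hx : |x| ≤ c) : hopShrink p c x = 0 := by
  rcases eq_or_ne x 0 with rfl | hx0
  · simp [hopShrink]
  · rw [hopShrink, max_eq_left (sub_rpow_mul_rpow_nonpos hp (abs_pos.mpr hx0) hx), zero_mul]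

theorem hopShrink_of_lt_abs (hp : p < 2) (hc : 0 ≤ c) (hx : c < |x|) :
    hopShrink p c x = (|x| - c ^ ((2 : ℝ) - p) * |x| ^ (p - 1)) * Real.sign x := by
  rw [hopShrink, max_eq_right (sub_rpow_mul_rpow_pos hp hc hx).le]

theorem hopShrink_eq_zero_iff (hp : p < 2) (hc : 0 ≤ c) : hopShrink p c x = 0 ↔ |x| ≤ c := by
  refine ⟨fun h => ?_, hopShrink_of_abs_le hp.le⟩
  by_contra! hx
  have hx0 : x ≠ 0 := by rintro rfl; simp at hx; linarith
  rw [hopShrink_of_lt_abs hp hc hx] at h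
  exact mul_ne_zero (sub_rpow_mul_rpow_pos hp hc hx).ne' (mt Real.sign_eq_zero_iff.mp hx0) h

theorem sub_hopDeriv (hp : p < 2) (hc : 0 ≤ c) : x - hopDeriv p c x = hopShrink p c x := by
  rcases le_or_gt |x| c with hx | hx
  · rw [hopDeriv, if_pos hx, hopShrink_of_abs_le hp.le hx, sub_self]
  · rw [hopDeriv, if_neg hx.not_ge, hopShrink_of_lt_abs hp hc hx]
    nth_rw 1 [← Real.abs_mul_sign x]
    ring

end Shrink

section Derivative

variable {p c x : ℝ}

theorem hasDerivAt_hopOuter (hp : p ≠ 0) (hx : x ≠ 0) :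
    HasDerivAt (fun y : ℝ => (1 / p) * c ^ ((2 : ℝ) - p) * |y| ^ p + c ^ 2 / 2 - c ^ 2 / p)
      (c ^ ((2 : ℝ) - p) * |x| ^ (p - 1) * Real.sign x) x := by
  have h := ((((hasDerivAt_abs hx).rpow_const (p := p) (Or.inl (abs_ne_zero.mpr hx))).const_mul
    ((1 / p) * c ^ ((2 : ℝ) - p))).add_const (c ^ 2 / 2)).sub_const (c ^ 2 / p)
  refine h.congr_deriv ?_
  rw [Real.sign_eq_signType_sign]
  field_simp

theorem hop_eq_piecewise :
    hop p c = {y | |y| ≤ c}.piecewise (fun y => y ^ 2 / 2)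
      (fun y => (1 / p) * c ^ ((2 : ℝ) - p) * |y| ^ p + c ^ 2 / 2 - c ^ 2 / p) :=
  rfl

theorem hasDerivAt_hop (hp : p ≠ 0) (hc : 0 < c) (x : ℝ) :
    HasDerivAt (hop p c) (hopDeriv p c x) x := by
  have hquad : HasDerivAt (fun y : ℝ => y ^ 2 / 2) x x := by
    simpa using (hasDerivAt_pow 2 x).div_const 2
  rcases lt_trichotomy |x| c with hx | hx | hx
  · rw [hopDeriv, if_pos hx.le]
    refine hquad.congr_of_eventuallyEq ?_
    filter_upwards [(isOpen_lt continuous_abs continuous_const).mem_nhds hx] with y hy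
    exact if_pos (le_of_lt hy)
  · have hx0 : x ≠ 0 := by rintro rfl; simp at hx; linarith
    have hc_pow : ∀ q, c ^ ((2 : ℝ) - p) * c ^ q = c ^ (2 - p + q) := fun q =>
      (Real.rpow_add hc _ _).symm
    have hslope : c ^ ((2 : ℝ) - p) * |x| ^ (p - 1) * Real.sign x = x := by
      rw [hx, hc_pow, show (2 : ℝ) - p + (p - 1) = 1 by ring, Real.rpow_one, ← hx,
        Real.abs_mul_sign]
    have hvalue : x ^ 2 / 2 = (1 / p) * c ^ ((2 : ℝ) - p) * |x| ^ p + c ^ 2 / 2 - c ^ 2 / p := by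
      rw [hx, mul_assoc, hc_pow, sub_add_cancel, ← sq_abs x, hx, Real.rpow_two]
      ring
    rw [hopDeriv, if_pos hx.le, hop_eq_piecewise]
    exact hquad.piecewise ((hasDerivAt_hopOuter hp hx0).congr_deriv hslope) hvalue
  · have hx0 : x ≠ 0 := by rintro rfl; simp at hx; linarith
    rw [hopDeriv, if_neg hx.not_ge]
    refine (hasDerivAt_hopOuter hp hx0).congr_of_eventuallyEq ?_
    filter_upwards [(isOpen_lt continuous_const continuous_abs).mem_nhds hx] with y hy
    exact if_neg (not_le.mpr hy)

end Derivative

/-- The HOP function is differentiable on ℝ, its proximity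
displacement `x − l'(x)` equals `max{0, |x| − c^{2−p}·|x|^{p−1}}·sign(x)`
(the right-hand side being 0 at `x = 0` since `sign 0 = 0`),
and this expression vanishes exactly when `|x| ≤ c`. -/
theorem hop_differentiable_prox (p c : ℝ) (hp : 0 < p) (hp1 : p ≤ 1) (hc : 0 < c) :
    (∀ x : ℝ, DifferentiableAt ℝ (hop p c) x) ∧
    (∀ x : ℝ, x - deriv (hop p c) x =
      max 0 (|x| - c ^ ((2 : ℝ) - p) * |x| ^ (p - 1)) * Real.sign x) ∧
    (∀ x : ℝ,
      max 0 (|x| - c ^ ((2 : ℝ) - p) * |x| ^ (p - 1)) * Real.sign x = 0 ↔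
      |x| ≤ c) := by
  have hderiv := hasDerivAt_hop hp.ne' hc
  have hp2 : p < 2 := by linarith
  refine ⟨fun x => (hderiv x).differentiableAt, fun x => ?_, fun x => ?_⟩
  · rw [(hderiv x).deriv]
    exact sub_hopDeriv hp2 hc.le
  · exact hopShrink_eq_zero_iff hp2 hc.le
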